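/- arXiv:2112.06708 — 2 statements merged into one kernel-verified Lean document; each statement's English description precedes it below -/
import Mathlib

section
/- Suppose W is a solution associated to (h_EZ, U) and there exists t₀ ≥ 0 such that U_t = 0 for all t < t₀. Let A ∈ F_{t₀} and define Ũ_t := E[1_A | F_t]·U_t. Then the process W̃ defined by W̃_t := E[1_A·W_{t∨t₀} | F_t] is a solution associated to (h_EZ, Ũ). -/
/-!
Write `χ = 1_A` and `Φ_s = U_s W_s^ρ`. For `s ≥ t₀` the process `W̃_s = χ W_s` is what the claim
forces, `χ` is `F_s`-measurable and `χ (χ W_s)^ρ = χ W_s^ρ`; for `s < t₀`, `U_s = 0`.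
Hence `Ũ_s W̃_s^ρ = χ Φ_s` for all `s`, and the fixed-point equation reduces to
`E[χ W_{t∨t₀} | F_t] = E[χ ∫_t^∞ Φ | F_t]`, which follows by pulling `χ` out of the conditional
expectation given `F_{t∨t₀}` and using the tower property.

Before `t₀`, `W̃` must be a càdlàg version of the martingale `E[χ W_{t₀} | F_t]`. It is the right
limit along the rationals: Doob's upcrossing inequality on finite sets of rationals rules out
oscillation, the domination `E[χ W_{t₀} | F_t] ≤ W_t` by the càdlàg process `W` rules out
explosion, and uniform integrability of conditional expectations identifies the limit as a
version; right continuity and completeness of the filtration make it adapted.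
-/


open MeasureTheory Filter Set Real Topology ENNReal

noncomputable section

variable {Ω : Type*} {mΩ : MeasurableSpace Ω}

/-- `Jproc μ F X t = E[∫_t^∞ X_s ds | F_t]`. -/
def Jproc (μ : Measure Ω) (F : Filtration ℝ mΩ) (X : ℝ → Ω → ℝ) (t : ℝ) : Ω → ℝ :=
  μ[(fun ω => ∫ s in Set.Ioi t, X s ω) | F t]

/-- `X =O Y`: there exist constants `k, K ∈ (0,∞)` with `kY ≤ X ≤ KY`
up to indistinguishability (on the relevant time range `t ≥ 0`). -/
def SameOrder (μ : Measure Ω) (X Y : ℝ → Ω → ℝ) : Prop :=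
  ∃ k K : ℝ, 0 < k ∧ 0 < K ∧
    ∀ᵐ ω ∂μ, ∀ t : ℝ, 0 ≤ t → k * Y t ω ≤ X t ω ∧ X t ω ≤ K * Y t ω

/-- The class `SO`. -/
def MemSO (μ : Measure Ω) (F : Filtration ℝ mΩ) (X : ℝ → Ω → ℝ) : Prop :=
  ProgMeasurable F X ∧ (∀ t : ℝ, 0 ≤ t → ∀ ω, 0 < X t ω) ∧
    (∫⁻ ω, (∫⁻ t in Set.Ioi (0 : ℝ), ENNReal.ofReal (X t ω)) ∂μ) < ⊤ ∧
    SameOrder μ X (Jproc μ F X)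

/-- The class `SO_ν`. -/
def MemSOnu (μ : Measure Ω) (F : Filtration ℝ mΩ) (ν : ℝ) (X : ℝ → Ω → ℝ) : Prop :=
  MemSO μ F X ∧ MemSO μ F (fun t ω => Real.exp (ν * t) * X t ω)

/-- The class `SO_+ = ∪_{ν>0} SO_ν`. -/
def MemSOplus (μ : Measure Ω) (F : Filtration ℝ mΩ) (X : ℝ → Ω → ℝ) : Prop :=
  ∃ ν : ℝ, 0 < ν ∧ MemSOnu μ F ν X

/-- A solution associated to `(h_EZ, U)` where `h_EZ(u,w) = u w^ρ`, `ρ = (θ-1)/θ`: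
a nonnegative progressively measurable càdlàg process `W` with
`E[∫_0^∞ U_s W_s^ρ ds] < ∞` and `W_t = E[∫_t^∞ U_s W_s^ρ ds | F_t]` a.s. for
all `t ≥ 0`. -/
def IsHEZSolution (μ : Measure Ω) (F : Filtration ℝ mΩ) (θ : ℝ)
    (U W : ℝ → Ω → ℝ) : Prop :=
  ProgMeasurable F W ∧ (∀ t ω, 0 ≤ W t ω) ∧
  (∀ ω, ∀ t : ℝ, 0 ≤ t → ContinuousWithinAt (fun s => W s ω) (Set.Ici t) t) ∧
  (∀ ω, ∀ t : ℝ, 0 < t → ∃ l : ℝ, Tendsto (fun s => W s ω) (𝓝[<] t) (𝓝 l)) ∧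
  (∫⁻ ω, (∫⁻ s in Set.Ioi (0 : ℝ),
      ENNReal.ofReal (U s ω * W s ω ^ ((θ - 1) / θ))) ∂μ) < ⊤ ∧
  ∀ t : ℝ, 0 ≤ t →
    W t =ᵐ[μ] μ[(fun ω => ∫ s in Set.Ioi t, U s ω * W s ω ^ ((θ - 1) / θ)) | F t]

/-- A maximal solution associated to `(h_EZ, U)`. -/
def IsMaximalHEZSolution (μ : Measure Ω) (F : Filtration ℝ mΩ) (θ : ℝ)
    (U W : ℝ → Ω → ℝ) : Prop :=
  IsHEZSolution μ F θ U W ∧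
  ∀ W' : ℝ → Ω → ℝ, IsHEZSolution μ F θ U W' →
    ∀ᵐ ω ∂μ, ∀ t : ℝ, 0 ≤ t → W' t ω ≤ W t ω


namespace MeasureTheory

variable {F : Filtration ℝ mΩ}

theorem IsStronglyProgressive.stronglyMeasurable_uncurry {X : ℝ → Ω → ℝ}
    (hX : IsStronglyProgressive F X) : StronglyMeasurable fun p : ℝ × Ω => X p.1 p.2 := by
  refine stronglyMeasurable_of_tendsto atTop (f := fun (n : ℕ) (p : ℝ × Ω) => X (min p.1 n) p.2)
    (fun n => ?_) (tendsto_pi_nhds.2 fun p => ?_)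
  · have hm : @Measurable (ℝ × Ω) (Iic (n : ℝ) × Ω) _ (Subtype.instMeasurableSpace.prod (F n))
        fun p => (⟨min p.1 n, mem_Iic.2 (min_le_right _ _)⟩, p.2) :=
      (measurable_fst.min measurable_const).subtype_mk.prodMk (measurable_snd.mono le_rfl (F.le _))
    exact (hX n).comp_measurable hm
  · refine tendsto_const_nhds.congr' ((eventually_ge_atTop ⌈p.1⌉₊).mono fun n hn => ?_)
    simp only [min_eq_left ((Nat.le_ceil _).trans (Nat.cast_le.2 hn))]

theorem StronglyAdapted.isStronglyProgressive_of_continuousWithinAt {X : ℝ → Ω → ℝ}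
    (hX : StronglyAdapted F X) (hrc : ∀ ω t, ContinuousWithinAt (X · ω) (Ici t) t) :
    IsStronglyProgressive F X := by
  intro i
  -- approximate `s` from the right by dyadic times, capped at `i` to stay `F i`-measurable
  set τ : ℕ → ℝ → ℝ := fun n s => min i ((⌊s * 2 ^ n⌋ + 1) / 2 ^ n)
  have hτ_meas : ∀ n, StronglyMeasurable[Subtype.instMeasurableSpace.prod (F i)]
      fun p : Iic i × Ω => X (τ n p.1) p.2 := by
    intro n
    have hk : @Measurable (Ω × ℤ) ℝ ((F i).prod Int.instMeasurableSpace) _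
        fun q => X (min i ((q.2 + 1) / 2 ^ n)) q.1 :=
      measurable_from_prod_countable_left fun k =>
        ((hX (min i ((k + 1) / 2 ^ n))).mono (F.mono (min_le_left _ _))).measurable
    have hfloor : @Measurable (Iic i × Ω) ℤ (Subtype.instMeasurableSpace.prod (F i)) _
        fun p => ⌊(p.1 : ℝ) * 2 ^ n⌋ :=
      Int.measurable_floor.comp ((measurable_subtype_coe.comp measurable_fst).mul_const _)
    exact (hk.comp (measurable_snd.prodMk hfloor)).stronglyMeasurable
  refine stronglyMeasurable_of_tendsto atTop hτ_meas (tendsto_pi_nhds.2 fun p => ?_)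
  have hτ_ge : ∀ n, (p.1 : ℝ) ≤ τ n p.1 := fun n =>
    le_min p.1.2 ((le_div_iff₀ (by positivity)).2 (Int.lt_floor_add_one _).le)
  have hτ_le : ∀ n, τ n p.1 ≤ p.1 + (1 / 2) ^ n := fun n => by
    refine (min_le_right _ _).trans ((div_le_iff₀ (by positivity)).2 ?_)
    rw [add_mul, ← mul_pow, one_div, inv_mul_cancel₀ two_ne_zero, one_pow]
    linarith [Int.floor_le ((p.1 : ℝ) * 2 ^ n)]
  have hτ : Tendsto (fun n => τ n p.1) atTop (𝓝[Ici (p.1 : ℝ)] p.1) := by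
    refine tendsto_nhdsWithin_of_tendsto_nhds_of_eventually_within _ ?_
      (Eventually.of_forall hτ_ge)
    refine tendsto_of_tendsto_of_tendsto_of_le_of_le tendsto_const_nhds ?_ hτ_ge hτ_le
    simpa using tendsto_const_nhds.add
      (tendsto_pow_atTop_nhds_zero_of_lt_one (by norm_num : (0 : ℝ) ≤ 1 / 2) (by norm_num))
  exact (hrc p.2 p.1).tendsto.comp hτ

end MeasureTheory

section Upcrossings

variable {ι : Type*} [Preorder ι] {g : ι → ℝ} {a b : ℝ}

def HasUpcrossings (g : ι → ℝ) (a b : ℝ) : ℕ → Set ι → Prop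
  | 0, _ => True
  | k + 1, S => ∃ u ∈ S, ∃ v ∈ S, u < v ∧ g u < a ∧ b < g v ∧ HasUpcrossings g a b k (S ∩ Ioi v)

theorem HasUpcrossings.mono {k : ℕ} {S T : Set ι} (hST : S ⊆ T) (h : HasUpcrossings g a b k S) :
    HasUpcrossings g a b k T := by
  induction k generalizing S T with
  | zero => trivial
  | succ k ih =>
    obtain ⟨u, hu, v, hv, huv, hga, hgb, h⟩ := h
    exact ⟨u, hST hu, v, hST hv, huv, hga, hgb, ih (inter_subset_inter_left _ hST) h⟩

theorem HasUpcrossings.comp_monotone {κ : Type*} [LinearOrder κ] {σ : κ → ι} (hσ : Monotone σ)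
    {k : ℕ} {S : Set ι} {T : Set κ} (hST : S ⊆ σ '' T) (h : HasUpcrossings g a b k S) :
    HasUpcrossings (g ∘ σ) a b k T := by
  induction k generalizing S T with
  | zero => trivial
  | succ k ih =>
    obtain ⟨u, hu, v, hv, huv, hga, hgb, h⟩ := h
    obtain ⟨i, hi, rfl⟩ := hST hu
    obtain ⟨j, hj, rfl⟩ := hST hv
    refine ⟨i, hi, j, hj, hσ.reflect_lt huv, hga, hgb, ih ?_ h⟩
    rintro _ ⟨hq, hjq⟩
    obtain ⟨n, hn, rfl⟩ := hST hq
    exact ⟨n, ⟨hn, hσ.reflect_lt hjq⟩, rfl⟩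

theorem HasUpcrossings.exists_inter_of_monotone {Q : ℕ → Set ι} (hQ : Monotone Q)
    (hcover : ∀ x, ∃ n, x ∈ Q n) {k : ℕ} {S : Set ι} (h : HasUpcrossings g a b k S) :
    ∃ n, HasUpcrossings g a b k (S ∩ Q n) := by
  induction k generalizing S with
  | zero => exact ⟨0, trivial⟩
  | succ k ih =>
    obtain ⟨u, hu, v, hv, huv, hga, hgb, h⟩ := h
    obtain ⟨n, hn⟩ := ih h
    obtain ⟨nu, hnu⟩ := hcover u
    obtain ⟨nv, hnv⟩ := hcover v
    refine ⟨max n (max nu nv), u, ⟨hu, hQ (by omega) hnu⟩, v, ⟨hv, hQ (by omega) hnv⟩, huv, hga,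
      hgb, hn.mono ?_⟩
    rintro x ⟨⟨hxS, hxv⟩, hxQ⟩
    exact ⟨⟨hxS, hQ (by omega) hxQ⟩, hxv⟩

end Upcrossings

section Doob

variable {μ : Measure Ω} {a b : ℝ} {ξ : Ω → ℝ}

theorem HasUpcrossings.exists_upcrossingsBefore_add_le {f : ℕ → Ω → ℝ} {ω : Ω} (hab : a < b)
    {k N : ℕ} (h : HasUpcrossings (f · ω) a b k (Ici N)) :
    ∃ M, upcrossingsBefore a b f N ω + k ≤ upcrossingsBefore a b f M ω := by
  induction k generalizing N with
  | zero => exact ⟨N, le_rfl⟩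
  | succ k ih =>
    obtain ⟨u, hu, v, -, huv, hga, hgb, h⟩ := h
    obtain ⟨M, hM⟩ := ih (N := v + 1) (h.mono fun n hn => Nat.succ_le_of_lt hn.2)
    have := upcrossingsBefore_lt_of_exists_upcrossing hab hu hga huv.le hgb
    exact ⟨M, by omega⟩

theorem HasUpcrossings.le_upcrossings {f : ℕ → Ω → ℝ} {ω : Ω} (hab : a < b) {k : ℕ}
    (h : HasUpcrossings (f · ω) a b k univ) : (k : ℝ≥0∞) ≤ upcrossings a b f ω := by
  obtain ⟨M, hM⟩ := (h.mono fun n _ => Nat.zero_le n).exists_upcrossingsBefore_add_le (N := 0) hab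
  rw [upcrossingsBefore_zero, zero_add] at hM
  exact (Nat.cast_le.2 hM).trans (le_iSup (fun N => (upcrossingsBefore a b f N ω : ℝ≥0∞)) M)

theorem mul_lintegral_upcrossings_condExp_le [IsProbabilityMeasure μ] (G : Filtration ℕ mΩ) :
    ENNReal.ofReal (b - a) * ∫⁻ ω, upcrossings a b (fun n => μ[ξ|G n]) ω ∂μ ≤
      ENNReal.ofReal (∫ ω, |ξ ω| ∂μ + |a|) := by
  refine ((martingale_condExp ξ G μ).submartingale.mul_lintegral_upcrossings_le_lintegral_pos_part
    a b).trans (iSup_le fun N => ?_)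
  have hint_abs : Integrable (fun ω => |(μ[ξ|G N]) ω| + |a|) μ :=
    integrable_condExp.abs.add (integrable_const _)
  calc ∫⁻ ω, ENNReal.ofReal ((μ[ξ|G N]) ω - a)⁺ ∂μ
      ≤ ∫⁻ ω, ENNReal.ofReal (|(μ[ξ|G N]) ω| + |a|) ∂μ := by
        refine lintegral_mono fun ω => ENNReal.ofReal_le_ofReal ?_
        rw [posPart_def]
        exact sup_le (by linarith [le_abs_self ((μ[ξ|G N]) ω), neg_abs_le a]) (by positivity)
    _ = ENNReal.ofReal (∫ ω, |(μ[ξ|G N]) ω| + |a| ∂μ) :=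
        (ofReal_integral_eq_lintegral_ofReal hint_abs
          (Eventually.of_forall fun ω => by positivity)).symm
    _ ≤ ENNReal.ofReal (∫ ω, |ξ ω| ∂μ + |a|) := by
        rw [integral_add integrable_condExp.abs (integrable_const _), integral_const, probReal_univ,
          one_smul]
        exact ENNReal.ofReal_le_ofReal
          (by linarith [integral_abs_condExp_le (μ := μ) (m := G N) ξ])

variable [IsProbabilityMeasure μ] (F : Filtration ℝ mΩ)

theorem measure_hasUpcrossings_finset_le (hab : a < b) (Q : Finset ℚ) {k : ℕ} (hk : k ≠ 0) :
    μ {ω | HasUpcrossings (fun q : ℚ => (μ[ξ|F q]) ω) a b k Q} ≤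
      ENNReal.ofReal (∫ ω, |ξ ω| ∂μ + |a|) / ENNReal.ofReal (b - a) / k := by
  rcases Q.eq_empty_or_nonempty with rfl | hQ
  · obtain ⟨k, rfl⟩ := Nat.exists_eq_succ_of_ne_zero hk
    simp [HasUpcrossings]
  set σ : ℕ → ℚ := fun n => Q.orderEmbOfFin rfl ⟨min n (Q.card - 1), by
    have := hQ.card_pos; omega⟩
  have hσ : Monotone σ := fun i j hij =>
    (Q.orderEmbOfFin rfl).monotone (Fin.mk_le_mk.2 (min_le_min_right _ hij))
  have hQσ : (Q : Set ℚ) ⊆ σ '' univ := by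
    intro q hq
    rw [← Q.range_orderEmbOfFin rfl] at hq
    obtain ⟨i, rfl⟩ := hq
    exact ⟨i, mem_univ _, congrArg _ (Fin.ext (min_eq_left (by omega)))⟩
  let G : Filtration ℕ mΩ :=
    ⟨fun n => F (σ n), fun i j hij => F.mono (Rat.cast_le.2 (hσ hij)), fun n => F.le _⟩
  have hmeas : Measurable (upcrossings a b fun n => μ[ξ|G n]) :=
    (martingale_condExp ξ G μ).submartingale.stronglyAdapted.measurable_upcrossings hab
  have hbound : ∫⁻ ω, upcrossings a b (fun n => μ[ξ|G n]) ω ∂μ ≤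
      ENNReal.ofReal (∫ ω, |ξ ω| ∂μ + |a|) / ENNReal.ofReal (b - a) := by
    rw [ENNReal.le_div_iff_mul_le (Or.inl (ENNReal.ofReal_pos.2 (sub_pos.2 hab)).ne')
      (Or.inl ENNReal.ofReal_ne_top), mul_comm]
    exact mul_lintegral_upcrossings_condExp_le G
  calc μ {ω | HasUpcrossings (fun q : ℚ => (μ[ξ|F q]) ω) a b k Q}
      ≤ μ {ω | (k : ℝ≥0∞) ≤ upcrossings a b (fun n => μ[ξ|G n]) ω} :=
        measure_mono fun ω hω => (hω.comp_monotone hσ hQσ).le_upcrossings hab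
    _ ≤ (∫⁻ ω, upcrossings a b (fun n => μ[ξ|G n]) ω ∂μ) / k :=
        meas_ge_le_lintegral_div hmeas.aemeasurable (Nat.cast_ne_zero.2 hk) (natCast_ne_top k)
    _ ≤ _ := ENNReal.div_le_div_right hbound _

theorem ae_exists_not_hasUpcrossings (hab : a < b) :
    ∀ᵐ ω ∂μ, ∃ k, ¬HasUpcrossings (fun q : ℚ => (μ[ξ|F q]) ω) a b k univ := by
  obtain ⟨e, he⟩ := exists_surjective_nat ℚ
  set Q : ℕ → Finset ℚ := fun n => (Finset.range n).image e
  have hQ : Monotone fun n => (Q n : Set ℚ) := fun m n hmn =>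
    Finset.coe_subset.2 (Finset.image_subset_image (Finset.range_subset_range.2 hmn))
  have hcover : ∀ q, ∃ n, q ∈ (Q n : Set ℚ) := fun q => by
    obtain ⟨m, rfl⟩ := he q
    exact ⟨m + 1, Finset.mem_image_of_mem e (Finset.self_mem_range_succ m)⟩
  set C := ENNReal.ofReal (∫ ω, |ξ ω| ∂μ + |a|) / ENNReal.ofReal (b - a)
  set Bad := {ω | ∀ k, HasUpcrossings (fun q : ℚ => (μ[ξ|F q]) ω) a b k univ}
  have hBad : ∀ k : ℕ, μ Bad ≤ C / (k + 1 : ℕ) := fun k => by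
    have hsub : Bad ⊆ ⋃ n, {ω | HasUpcrossings (fun q : ℚ => (μ[ξ|F q]) ω) a b (k + 1) (Q n)} :=
      fun ω hω => by
        obtain ⟨n, hn⟩ := (hω (k + 1)).exists_inter_of_monotone hQ hcover
        exact mem_iUnion.2 ⟨n, hn.mono inter_subset_right⟩
    refine (measure_mono hsub).trans ?_
    rw [Monotone.measure_iUnion fun m n hmn ω hω => hω.mono (hQ hmn)]
    exact iSup_le fun n => measure_hasUpcrossings_finset_le F hab (Q n) k.succ_ne_zero
  have hlim : Tendsto (fun k : ℕ => C / (k + 1 : ℕ)) atTop (𝓝 0) := by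
    have hC : C ≠ ⊤ := (ENNReal.div_lt_top ofReal_ne_top
      (ENNReal.ofReal_pos.2 (sub_pos.2 hab)).ne').ne
    simpa [div_eq_mul_inv] using ENNReal.Tendsto.const_mul
      (ENNReal.tendsto_inv_nat_nhds_zero.comp (tendsto_add_atTop_nat 1)) (Or.inr hC)
  have hnull : μ Bad = 0 := le_antisymm (ge_of_tendsto' hlim hBad) zero_le
  filter_upwards [measure_eq_zero_iff_ae_notMem.1 hnull] with ω hω
  simpa [Bad] using hω

theorem ae_forall_exists_not_hasUpcrossings :
    ∀ᵐ ω ∂μ, ∀ a b : ℚ, a < b → ∃ k, ¬HasUpcrossings (fun q : ℚ => (μ[ξ|F q]) ω) a b k univ := by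
  refine ae_all_iff.2 fun a => ae_all_iff.2 fun b => ?_
  by_cases hab : a < b
  · filter_upwards [ae_exists_not_hasUpcrossings F (Rat.cast_lt.2 hab)] with ω hω _ using hω
  · exact Eventually.of_forall fun ω h => absurd h hab

end Doob

section RatLimits

theorem comap_ratCast_nhdsWithin_neBot {s : Set ℝ} (hs : IsOpen s) {t : ℝ} (ht : t ∈ closure s) :
    (comap ((↑) : ℚ → ℝ) (𝓝[s] t)).NeBot := by
  refine comap_neBot fun U hU => ?_
  obtain ⟨V, hVo, htV, hVU⟩ := mem_nhdsWithin.1 hU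
  obtain ⟨q, hq⟩ :=
    Rat.denseRange_cast.exists_mem_open (hVo.inter hs) (mem_closure_iff.1 ht V hVo htV)
  exact ⟨q, hVU hq⟩

instance (t : ℝ) : (comap ((↑) : ℚ → ℝ) (𝓝[>] t)).NeBot :=
  comap_ratCast_nhdsWithin_neBot isOpen_Ioi (by simp)

instance (t : ℝ) : (comap ((↑) : ℚ → ℝ) (𝓝[<] t)).NeBot :=
  comap_ratCast_nhdsWithin_neBot isOpen_Iio (by simp)

theorem exists_tendsto_of_not_frequently_lt_lt {α : Type*} {l : Filter α} [l.NeBot] {g : α → ℝ}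
    (hle : IsBoundedUnder (· ≤ ·) l g) (hge : IsBoundedUnder (· ≥ ·) l g)
    (h : ∀ a b : ℚ, a < b → ¬((∃ᶠ x in l, g x < a) ∧ ∃ᶠ x in l, b < g x)) :
    ∃ c, Tendsto g l (𝓝 c) := by
  refine ⟨limsup g l, tendsto_of_liminf_eq_limsup ?_ rfl hle hge⟩
  refine (liminf_le_limsup hle hge).antisymm (not_lt.1 fun hlt => ?_)
  obtain ⟨a, ha, hab⟩ := exists_rat_btwn hlt
  obtain ⟨b, hab, hb⟩ := exists_rat_btwn hab
  exact h a b (by exact_mod_cast hab) ⟨frequently_lt_of_liminf_lt hle.isCoboundedUnder_ge ha,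
    frequently_lt_of_lt_limsup hge.isCoboundedUnder_le hb⟩

variable {g : ℚ → ℝ} {a b : ℝ}

theorem hasUpcrossings_of_frequently_nhdsGT {t : ℝ}
    (ha : ∃ᶠ q in comap (↑) (𝓝[>] t), g q < a) (hb : ∃ᶠ q in comap (↑) (𝓝[>] t), b < g q)
    (k : ℕ) : HasUpcrossings g a b k univ := by
  -- new upcrossings are found closer to `t`, before the old ones, which stay right of `γ`
  suffices ∀ k, ∃ γ, t < γ ∧ HasUpcrossings g a b k ((↑) ⁻¹' Ioi γ) by
    obtain ⟨γ, -, hk⟩ := this k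
    exact hk.mono (subset_univ _)
  intro k
  induction k with
  | zero => exact ⟨t + 1, by linarith, trivial⟩
  | succ k ih =>
    obtain ⟨γ, htγ, hk⟩ := ih
    obtain ⟨v, hgv, hv⟩ :=
      (hb.and_eventually (preimage_mem_comap (Ioo_mem_nhdsGT htγ))).exists
    obtain ⟨u, hgu, hu⟩ :=
      (ha.and_eventually (preimage_mem_comap (Ioo_mem_nhdsGT hv.1))).exists
    obtain ⟨γ', htγ', hγ'u⟩ := exists_between hu.1
    refine ⟨γ', htγ', u, hγ'u, v, hγ'u.trans hu.2, by exact_mod_cast hu.2, hgu, hgv,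
      hk.mono fun q (hq : γ < (q : ℝ)) => ⟨?_, ?_⟩⟩
    · exact (hγ'u.trans (hu.2.trans hv.2)).trans hq
    · exact_mod_cast hv.2.trans hq

theorem hasUpcrossings_of_frequently_nhdsLT {t : ℝ}
    (ha : ∃ᶠ q in comap (↑) (𝓝[<] t), g q < a) (hb : ∃ᶠ q in comap (↑) (𝓝[<] t), b < g q)
    (k : ℕ) : HasUpcrossings g a b k univ := by
  suffices ∀ k, ∀ α < t, HasUpcrossings g a b k ((↑) ⁻¹' Ioi α) from
    (this k (t - 1) (by linarith)).mono (subset_univ _)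
  intro k
  induction k with
  | zero => exact fun _ _ => trivial
  | succ k ih =>
    intro α hα
    obtain ⟨u, hgu, hu⟩ :=
      (ha.and_eventually (preimage_mem_comap (Ioo_mem_nhdsLT hα))).exists
    obtain ⟨v, hgv, hv⟩ :=
      (hb.and_eventually (preimage_mem_comap (Ioo_mem_nhdsLT hu.2))).exists
    refine ⟨u, hu.1, v, hu.1.trans hv.1, by exact_mod_cast hv.1, hgu, hgv,
      (ih v hv.2).mono fun q (hq : (v : ℝ) < q) => ⟨?_, ?_⟩⟩
    · exact (hu.1.trans hv.1).trans hq
    · exact_mod_cast hq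

theorem tendsto_nhdsWithin_of_tendsto_comap_ratCast {s : Set ℝ} (hs : IsOpen s) {t L : ℝ}
    {h : ℝ → ℝ} (hg : Tendsto g (comap (↑) (𝓝[s] t)) (𝓝 L))
    (hh : ∀ᶠ r in 𝓝[s] t, Tendsto g (comap (↑) (𝓝[>] r)) (𝓝 (h r))) :
    Tendsto h (𝓝[s] t) (𝓝 L) := by
  refine (closed_nhds_basis L).tendsto_right_iff.2 fun K ⟨hKL, hK⟩ => ?_
  obtain ⟨O, hO, hOK⟩ := mem_comap.1 (hg hKL)
  obtain ⟨V, hVo, htV, hVO⟩ := mem_nhdsWithin.1 hO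
  filter_upwards [mem_nhdsWithin.2 ⟨V, hVo, htV, subset_rfl⟩, hh] with r hr hgr
  exact hK.mem_of_tendsto hgr (eventually_of_mem (preimage_mem_comap
    (mem_nhdsWithin_of_mem_nhds ((hVo.inter hs).mem_nhds hr))) fun q hq => hOK (hVO hq))

-- `0` outside `[0, t₀)`, where `g` is not controlled, keeps the regularization adapted
def ratRightLimIco (t₀ : ℝ) (g : ℚ → ℝ) (t : ℝ) : ℝ :=
  if t ∈ Ico 0 t₀ then limUnder (comap (↑) (𝓝[>] t)) g else 0

variable {v : ℝ → ℝ} {t₀ : ℝ}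

theorem tendsto_ratRightLimIco (hgv : ∀ q : ℚ, (q : ℝ) ∈ Ico 0 t₀ → 0 ≤ g q ∧ g q ≤ v q)
    (hv : ∀ t ∈ Ico 0 t₀, ContinuousWithinAt v (Ici t) t)
    (hosc : ∀ a b : ℚ, a < b → ∃ k, ¬HasUpcrossings g a b k univ) {t : ℝ} (ht : t ∈ Ico 0 t₀) :
    Tendsto g (comap (↑) (𝓝[>] t)) (𝓝 (ratRightLimIco t₀ g t)) := by
  have hev : ∀ᶠ q in comap (↑) (𝓝[>] t), 0 ≤ g q ∧ g q ≤ v q :=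
    eventually_of_mem (preimage_mem_comap (Ioo_mem_nhdsGT ht.2)) fun q hq =>
      hgv q ⟨ht.1.trans hq.1.le, hq.2⟩
  have hvlim : Tendsto (fun q : ℚ => v q) (comap (↑) (𝓝[>] t)) (𝓝 (v t)) :=
    (hv t ht).tendsto.comp (tendsto_comap.mono_right (nhdsWithin_mono _ Ioi_subset_Ici_self))
  obtain ⟨c, hc⟩ := exists_tendsto_of_not_frequently_lt_lt
    (hvlim.isBoundedUnder_le.mono_le (hev.mono fun _ h => h.2))
    (isBoundedUnder_of_eventually_ge (hev.mono fun _ h => h.1)) fun a b hab h =>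
      (hosc a b hab).elim fun k hk => hk (hasUpcrossings_of_frequently_nhdsGT h.1 h.2 k)
  rwa [ratRightLimIco, if_pos ht, hc.limUnder_eq]

theorem ratRightLimIco_nonneg (hgv : ∀ q : ℚ, (q : ℝ) ∈ Ico 0 t₀ → 0 ≤ g q ∧ g q ≤ v q)
    (hv : ∀ t ∈ Ico 0 t₀, ContinuousWithinAt v (Ici t) t)
    (hosc : ∀ a b : ℚ, a < b → ∃ k, ¬HasUpcrossings g a b k univ) (t : ℝ) :
    0 ≤ ratRightLimIco t₀ g t := by
  by_cases ht : t ∈ Ico 0 t₀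
  · exact ge_of_tendsto (tendsto_ratRightLimIco hgv hv hosc ht)
      (eventually_of_mem (preimage_mem_comap (Ioo_mem_nhdsGT ht.2)) fun q hq =>
        (hgv q ⟨ht.1.trans hq.1.le, hq.2⟩).1)
  · simp [ratRightLimIco, ht]

theorem continuousWithinAt_ratRightLimIco
    (hgv : ∀ q : ℚ, (q : ℝ) ∈ Ico 0 t₀ → 0 ≤ g q ∧ g q ≤ v q)
    (hv : ∀ t ∈ Ico 0 t₀, ContinuousWithinAt v (Ici t) t)
    (hosc : ∀ a b : ℚ, a < b → ∃ k, ¬HasUpcrossings g a b k univ) {t : ℝ} (ht : t < t₀) :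
    ContinuousWithinAt (ratRightLimIco t₀ g) (Ici t) t := by
  rw [← continuousWithinAt_Ioi_iff_Ici]
  rcases lt_or_ge t 0 with ht0 | ht0
  · refine (continuousWithinAt_const (b := (0 : ℝ))).congr_of_eventuallyEq
      (eventually_of_mem (Ioo_mem_nhdsGT ht0) fun r hr => ?_) ?_
    · exact if_neg fun h => (not_le.2 hr.2) h.1
    · exact if_neg fun h => (not_le.2 ht0) h.1
  · exact tendsto_nhdsWithin_of_tendsto_comap_ratCast isOpen_Ioi
      (tendsto_ratRightLimIco hgv hv hosc ⟨ht0, ht⟩)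
      (eventually_of_mem (Ioo_mem_nhdsGT ht) fun r hr =>
        tendsto_ratRightLimIco hgv hv hosc ⟨ht0.trans hr.1.le, hr.2⟩)

theorem exists_tendsto_nhdsLT_ratRightLimIco
    (hgv : ∀ q : ℚ, (q : ℝ) ∈ Ico 0 t₀ → 0 ≤ g q ∧ g q ≤ v q)
    (hv : ∀ t ∈ Ico 0 t₀, ContinuousWithinAt v (Ici t) t)
    (hv' : ∀ t ∈ Ioc 0 t₀, ∃ l, Tendsto v (𝓝[<] t) (𝓝 l))
    (hosc : ∀ a b : ℚ, a < b → ∃ k, ¬HasUpcrossings g a b k univ) {t : ℝ} (ht : t ∈ Ioc 0 t₀) :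
    ∃ l, Tendsto (ratRightLimIco t₀ g) (𝓝[<] t) (𝓝 l) := by
  obtain ⟨l, hl⟩ := hv' t ht
  have hev : ∀ᶠ q in comap (↑) (𝓝[<] t), 0 ≤ g q ∧ g q ≤ v q :=
    eventually_of_mem (preimage_mem_comap (Ioo_mem_nhdsLT ht.1)) fun q hq =>
      hgv q ⟨hq.1.le, hq.2.trans_le ht.2⟩
  obtain ⟨c, hc⟩ := exists_tendsto_of_not_frequently_lt_lt
    ((hl.comp tendsto_comap).isBoundedUnder_le.mono_le (hev.mono fun _ h => h.2))
    (isBoundedUnder_of_eventually_ge (hev.mono fun _ h => h.1)) fun a b hab h =>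
      (hosc a b hab).elim fun k hk => hk (hasUpcrossings_of_frequently_nhdsLT h.1 h.2 k)
  exact ⟨c, tendsto_nhdsWithin_of_tendsto_comap_ratCast isOpen_Iio hc
    (eventually_of_mem (Ioo_mem_nhdsLT ht.1) fun r hr =>
      tendsto_ratRightLimIco hgv hv hosc ⟨hr.1.le, hr.2.trans_le ht.2⟩)⟩

end RatLimits

section Regularization

variable {μ : Measure Ω}

theorem stronglyMeasurable_of_tendsto_comap_ratCast_nhdsGT {F : Filtration ℝ mΩ}
    (hF : ∀ t, (F t : MeasurableSpace Ω) = ⨅ s ∈ Ioi t, (F s : MeasurableSpace Ω)) {t : ℝ}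
    {f : ℚ → Ω → ℝ} (hf : ∀ q : ℚ, StronglyMeasurable[F q] (f q)) {g : Ω → ℝ}
    (hlim : ∀ ω, Tendsto (f · ω) (comap (↑) (𝓝[>] t)) (𝓝 (g ω))) :
    StronglyMeasurable[F t] g := by
  have hu : ∀ u, t < u → Measurable[F u] g := fun u htu => by
    refine (stronglyMeasurable_of_tendsto (comap (↑) (𝓝[>] t))
      (f := fun q : ℚ => if (q : ℝ) < u then f q else 0) (fun q => ?_)
      (tendsto_pi_nhds.2 fun ω => (hlim ω).congr' ?_)).measurable
    · split_ifs with hq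
      · exact (hf q).mono (F.mono hq.le)
      · exact stronglyMeasurable_const
    · exact eventually_of_mem (preimage_mem_comap (Ioo_mem_nhdsGT htu)) fun q hq => by
        simp only [if_pos hq.2]
  refine Measurable.stronglyMeasurable fun s hs => ?_
  rw [hF t]
  exact MeasurableSpace.measurableSet_iInf.2 fun u =>
    MeasurableSpace.measurableSet_iInf.2 fun htu => hu u htu hs

theorem ae_eq_condExp_of_ae_tendsto_condExp [IsFiniteMeasure μ] {ξ : Ω → ℝ}
    (hξ : Integrable ξ μ) {m₀ : MeasurableSpace Ω} {m : ℕ → MeasurableSpace Ω} (hm₀ : m₀ ≤ mΩ)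
    (hm : ∀ n, m n ≤ mΩ) (hm₀m : ∀ᶠ n in atTop, m₀ ≤ m n) {g : Ω → ℝ}
    (hg : StronglyMeasurable[m₀] g)
    (hlim : ∀ᵐ ω ∂μ, Tendsto (fun n => (μ[ξ|m n]) ω) atTop (𝓝 (g ω))) :
    g =ᵐ[μ] μ[ξ|m₀] := by
  obtain ⟨hmeas, hui, C, hC⟩ := hξ.uniformIntegrable_condExp hm
  have hg_meas : AEStronglyMeasurable[mΩ] g μ := (hg.mono hm₀).aestronglyMeasurable
  have hgL1 : MemLp g 1 μ := ⟨hg_meas,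
    (Lp.eLpNorm_le_of_ae_tendsto (Eventually.of_forall hC) hmeas hlim).trans_lt coe_lt_top⟩
  have hL1 := tendsto_Lp_finite_of_tendsto_ae le_rfl one_ne_top hmeas hgL1 hui hlim
  refine ae_eq_condExp_of_forall_setIntegral_eq hm₀ hξ
    (fun s _ _ => (hgL1.integrable le_rfl).integrableOn) (fun s hs _ => ?_) hg.aestronglyMeasurable
  refine tendsto_nhds_unique (tendsto_setIntegral_of_L1' g hg_meas
    (Eventually.of_forall fun n => integrable_condExp) hL1 s) (tendsto_const_nhds.congr' ?_)
  filter_upwards [hm₀m] with n hn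
  exact (setIntegral_condExp (hm n) hξ (hn s hs)).symm

theorem ae_forall_rat_condExp_nonneg_le (F : Filtration ℝ mΩ) {t₀ : ℝ} {ξ : Ω → ℝ}
    (hξ0 : 0 ≤ᵐ[μ] ξ) {V : ℝ → Ω → ℝ} (hξV : ∀ t ∈ Ico 0 t₀, μ[ξ|F t] ≤ᵐ[μ] V t) :
    ∀ᵐ ω ∂μ, ∀ q : ℚ, (q : ℝ) ∈ Ico 0 t₀ → 0 ≤ (μ[ξ|F q]) ω ∧ (μ[ξ|F q]) ω ≤ V q ω := by
  refine ae_all_iff.2 fun q => ?_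
  by_cases hq : (q : ℝ) ∈ Ico 0 t₀
  · filter_upwards [condExp_nonneg hξ0, hξV q hq] with ω h0 hV _ using ⟨h0, hV⟩
  · exact Eventually.of_forall fun ω h => absurd h hq

theorem exists_cadlag_modification_condExp [IsProbabilityMeasure μ] (F : Filtration ℝ mΩ)
    (hcomplete : ∀ s : Set Ω, μ s = 0 → ∀ t : ℝ, MeasurableSet[F t] s)
    (hrightcts : ∀ t : ℝ, (F t : MeasurableSpace Ω) = ⨅ s ∈ Ioi t, (F s : MeasurableSpace Ω))
    {t₀ : ℝ} {ξ : Ω → ℝ} (hξ : Integrable ξ μ) (hξ0 : 0 ≤ᵐ[μ] ξ) {V : ℝ → Ω → ℝ}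
    (hξV : ∀ t ∈ Ico 0 t₀, μ[ξ|F t] ≤ᵐ[μ] V t)
    (hVrc : ∀ ω, ∀ t ∈ Ico 0 t₀, ContinuousWithinAt (V · ω) (Ici t) t)
    (hVll : ∀ ω, ∀ t ∈ Ioc 0 t₀, ∃ l, Tendsto (V · ω) (𝓝[<] t) (𝓝 l)) :
    ∃ N : ℝ → Ω → ℝ, StronglyAdapted F N ∧ (∀ t ω, 0 ≤ N t ω) ∧
      (∀ t ∈ Ico 0 t₀, N t =ᵐ[μ] μ[ξ|F t]) ∧
      (∀ ω, ∀ t < t₀, ContinuousWithinAt (N · ω) (Ici t) t) ∧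
      (∀ ω, ∀ t ∈ Ioc 0 t₀, ∃ l, Tendsto (N · ω) (𝓝[<] t) (𝓝 l)) := by
  set M : ℚ → Ω → ℝ := fun q => μ[ξ|F q]
  set G := {ω | (∀ q : ℚ, (q : ℝ) ∈ Ico 0 t₀ → 0 ≤ M q ω ∧ M q ω ≤ V q ω) ∧
    ∀ a b : ℚ, a < b → ∃ k, ¬HasUpcrossings (M · ω) a b k univ}
  have hG : ∀ᵐ ω ∂μ, ω ∈ G := by
    filter_upwards [ae_forall_rat_condExp_nonneg_le F hξ0 hξV,
      ae_forall_exists_not_hasUpcrossings F (ξ := ξ) (μ := μ)] with ω h1 h2 using ⟨h1, h2⟩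
  have hGF : ∀ t, MeasurableSet[F t] G := fun t => (hcomplete Gᶜ (ae_iff.1 hG) t).of_compl
  set N : ℝ → Ω → ℝ := fun t => G.indicator fun ω => ratRightLimIco t₀ (M · ω) t
  have hNlim : ∀ t ∈ Ico 0 t₀, ∀ ω,
      Tendsto (fun q => G.indicator (M q) ω) (comap (↑) (𝓝[>] t)) (𝓝 (N t ω)) := by
    intro t ht ω
    by_cases hω : ω ∈ G
    · simpa [N, hω] using tendsto_ratRightLimIco hω.1 (hVrc ω) hω.2 ht
    · simp [N, hω]
  have hNadapted : StronglyAdapted F N := fun t => by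
    by_cases ht : t ∈ Ico 0 t₀
    · exact stronglyMeasurable_of_tendsto_comap_ratCast_nhdsGT hrightcts
        (fun q => stronglyMeasurable_condExp.indicator (hGF q)) (hNlim t ht)
    · have : N t = 0 := by simp only [N, ratRightLimIco, if_neg ht, indicator_zero]; rfl
      rw [this]
      exact stronglyMeasurable_const
  refine ⟨N, hNadapted, fun t ω => ?_, fun t ht => ?_, fun ω t ht => ?_, fun ω t ht => ?_⟩
  · by_cases hω : ω ∈ G
    · simpa [N, hω] using ratRightLimIco_nonneg hω.1 (hVrc ω) hω.2 t
    · simp [N, hω]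
  · obtain ⟨r, hr⟩ := exists_seq_tendsto (comap ((↑) : ℚ → ℝ) (𝓝[>] t))
    refine ae_eq_condExp_of_ae_tendsto_condExp hξ (F.le t) (fun n => F.le _)
      ((hr.eventually (preimage_mem_comap self_mem_nhdsWithin)).mono fun n hn =>
        F.mono (le_of_lt hn)) (hNadapted t) ?_
    filter_upwards [hG] with ω hω
    have := (hNlim t ht ω).comp hr
    simp only [indicator_of_mem hω] at this
    exact this
  · by_cases hω : ω ∈ G
    · simpa [N, hω] using continuousWithinAt_ratRightLimIco hω.1 (hVrc ω) hω.2 ht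
    · simpa [N, hω] using continuousWithinAt_const
  · by_cases hω : ω ∈ G
    · simpa [N, hω] using exists_tendsto_nhdsLT_ratRightLimIco hω.1 (hVrc ω) (hVll ω) hω.2 ht
    · exact ⟨0, by simp [N, hω]⟩

end Regularization

section Pasting

variable {f g : ℝ → ℝ} {t₀ t : ℝ}

theorem continuousWithinAt_Ici_ite (hf : t < t₀ → ContinuousWithinAt f (Ici t) t)
    (hg : t₀ ≤ t → ContinuousWithinAt g (Ici t) t) :
    ContinuousWithinAt (fun s => if s < t₀ then f s else g s) (Ici t) t := by
  rcases lt_or_ge t t₀ with h | h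
  · exact (hf h).congr_of_eventuallyEq
      (eventually_of_mem (mem_nhdsWithin_of_mem_nhds (Iio_mem_nhds h)) fun s hs => if_pos hs)
      (if_pos h)
  · exact (hg h).congr_of_eventuallyEq
      (eventually_nhdsWithin_of_forall fun s hs => if_neg (not_lt.2 (h.trans hs)))
      (if_neg (not_lt.2 h))

theorem exists_tendsto_nhdsLT_ite (hf : t ≤ t₀ → ∃ l, Tendsto f (𝓝[<] t) (𝓝 l))
    (hg : t₀ < t → ∃ l, Tendsto g (𝓝[<] t) (𝓝 l)) :
    ∃ l, Tendsto (fun s => if s < t₀ then f s else g s) (𝓝[<] t) (𝓝 l) := by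
  rcases le_or_gt t t₀ with h | h
  · obtain ⟨l, hl⟩ := hf h
    exact ⟨l, hl.congr' (eventually_nhdsWithin_of_forall fun s hs =>
      (if_pos (lt_of_lt_of_le hs h)).symm)⟩
  · obtain ⟨l, hl⟩ := hg h
    exact ⟨l, hl.congr' (eventually_of_mem (Ioo_mem_nhdsLT h) fun s hs =>
      (if_neg (not_lt.2 hs.1.le)).symm)⟩

end Pasting

section Tail

variable {μ : Measure Ω} {F : Filtration ℝ mΩ} {Φ W : ℝ → Ω → ℝ} {t₀ : ℝ}

theorem integrable_setIntegral_Ioi (hΦm : StronglyMeasurable fun p : ℝ × Ω => Φ p.1 p.2)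
    (hΦ0 : ∀ s ω, 0 ≤ Φ s ω)
    (hΦint : ∫⁻ ω, (∫⁻ s in Ioi (0 : ℝ), ENNReal.ofReal (Φ s ω)) ∂μ < ⊤) {r : ℝ} (hr : 0 ≤ r) :
    Integrable (fun ω => ∫ s in Ioi r, Φ s ω) μ := by
  refine ⟨(hΦm.comp_measurable measurable_swap).integral_prod_right'.aestronglyMeasurable,
    lt_of_le_of_lt (lintegral_mono fun ω => ?_) hΦint⟩
  calc ‖∫ s in Ioi r, Φ s ω‖ₑ ≤ ∫⁻ s in Ioi r, ‖Φ s ω‖ₑ := enorm_integral_le_lintegral_enorm _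
    _ = ∫⁻ s in Ioi r, ENNReal.ofReal (Φ s ω) :=
        lintegral_congr fun s => Real.enorm_eq_ofReal (hΦ0 s ω)
    _ ≤ ∫⁻ s in Ioi 0, ENNReal.ofReal (Φ s ω) := lintegral_mono_set (Ioi_subset_Ioi hr)

theorem setIntegral_Ioi_max_eq {f : ℝ → ℝ} (hf : ∀ s < t₀, f s = 0) (t : ℝ) :
    ∫ s in Ioi (max t t₀), f s = ∫ s in Ioi t, f s := by
  rcases le_total t t₀ with h | h
  · rw [max_eq_right h]
    refine (setIntegral_eq_of_subset_of_ae_sdiff_eq_zero measurableSet_Ioi.nullMeasurableSet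
      (Ioi_subset_Ioi h) ((Measure.ae_ne volume t₀).mono fun s hs hst => ?_)).symm
    exact hf s (lt_of_le_of_ne (not_lt.1 hst.2) hs)
  · rw [max_eq_left h]

theorem condExp_mul_max_eq [IsFiniteMeasure μ]
    (hW : ∀ t, 0 ≤ t → W t =ᵐ[μ] μ[fun ω => ∫ s in Ioi t, Φ s ω|F t])
    (hΦ : ∀ s < t₀, ∀ ω, Φ s ω = 0)
    (hY : ∀ r, 0 ≤ r → Integrable (fun ω => ∫ s in Ioi r, Φ s ω) μ) {χ : Ω → ℝ} {c : ℝ}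
    (hχ : StronglyMeasurable[F t₀] χ) (hχc : ∀ ω, ‖χ ω‖ ≤ c) {t : ℝ} (ht : 0 ≤ t) :
    μ[fun ω => χ ω * W (max t t₀) ω|F t] =ᵐ[μ] μ[fun ω => χ ω * ∫ s in Ioi t, Φ s ω|F t] := by
  set T := max t t₀
  have hT : 0 ≤ T := ht.trans (le_max_left _ _)
  have hpull : (fun ω => χ ω * W T ω) =ᵐ[μ] μ[fun ω => χ ω * ∫ s in Ioi T, Φ s ω|F T] := by
    refine EventuallyEq.trans ?_ (condExp_stronglyMeasurable_mul_of_bound (F.le T)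
      (hχ.mono (F.mono (le_max_right _ _))) (hY T hT) c (Eventually.of_forall hχc)).symm
    filter_upwards [hW T hT] with ω hω
    simp [hω]
  have hshift : (fun ω => χ ω * ∫ s in Ioi T, Φ s ω) = fun ω => χ ω * ∫ s in Ioi t, Φ s ω :=
    funext fun ω => by rw [setIntegral_Ioi_max_eq (fun s hs => hΦ s hs ω)]
  rw [hshift] at hpull
  exact (condExp_congr_ae hpull).trans (condExp_condExp_of_le (F.mono (le_max_left _ _)) (F.le T))

theorem condExp_mul_le [IsFiniteMeasure μ]
    (hW : ∀ t, 0 ≤ t → W t =ᵐ[μ] μ[fun ω => ∫ s in Ioi t, Φ s ω|F t])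
    (hΦ : ∀ s < t₀, ∀ ω, Φ s ω = 0) (hΦ0 : ∀ s ω, 0 ≤ Φ s ω)
    (hY : ∀ r, 0 ≤ r → Integrable (fun ω => ∫ s in Ioi r, Φ s ω) μ) {χ : Ω → ℝ}
    (hχ : StronglyMeasurable[F t₀] χ) (hχ0 : ∀ ω, 0 ≤ χ ω) (hχ1 : ∀ ω, χ ω ≤ 1) {t : ℝ}
    (ht : t ∈ Ico 0 t₀) :
    μ[fun ω => χ ω * W t₀ ω|F t] ≤ᵐ[μ] W t := by
  have hχ_norm : ∀ ω, ‖χ ω‖ ≤ 1 := fun ω => (Real.norm_of_nonneg (hχ0 ω)).trans_le (hχ1 ω)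
  have h := condExp_mul_max_eq hW hΦ hY hχ hχ_norm ht.1
  rw [max_eq_right ht.2.le] at h
  refine h.trans_le ((condExp_mono ?_ (hY t ht.1) (Eventually.of_forall fun ω => ?_)).trans_eq
    (hW t ht.1).symm)
  · exact (hY t ht.1).bdd_mul (hχ.mono (F.le t₀)).aestronglyMeasurable
      (Eventually.of_forall hχ_norm)
  · exact mul_le_of_le_one_left (setIntegral_nonneg measurableSet_Ioi fun s _ => hΦ0 s ω) (hχ1 ω)

end Tail

theorem exists_cadlag_modification_condExp_mul_max {μ : Measure Ω} [IsProbabilityMeasure μ]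
    (F : Filtration ℝ mΩ) (hcomplete : ∀ s : Set Ω, μ s = 0 → ∀ t : ℝ, MeasurableSet[F t] s)
    (hrightcts : ∀ t : ℝ, (F t : MeasurableSpace Ω) = ⨅ s ∈ Ioi t, (F s : MeasurableSpace Ω))
    {t₀ : ℝ} (ht₀ : 0 ≤ t₀) {χ : Ω → ℝ} (hχ : StronglyMeasurable[F t₀] χ) (hχ0 : ∀ ω, 0 ≤ χ ω)
    (hχ1 : ∀ ω, χ ω ≤ 1) {W : ℝ → Ω → ℝ} (hWprog : IsStronglyProgressive F W)
    (hW0 : ∀ t ω, 0 ≤ W t ω)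
    (hWrc : ∀ ω, ∀ t : ℝ, 0 ≤ t → ContinuousWithinAt (W · ω) (Ici t) t)
    (hWll : ∀ ω, ∀ t : ℝ, 0 < t → ∃ l, Tendsto (W · ω) (𝓝[<] t) (𝓝 l))
    (hWint : ∀ t : ℝ, 0 ≤ t → Integrable (W t) μ)
    (hdom : ∀ t ∈ Ico 0 t₀, μ[fun ω => χ ω * W t₀ ω|F t] ≤ᵐ[μ] W t) :
    ∃ W' : ℝ → Ω → ℝ,
      (∀ t : ℝ, 0 ≤ t → W' t =ᵐ[μ] μ[fun ω => χ ω * W (max t t₀) ω|F t]) ∧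
      (∀ t : ℝ, t₀ ≤ t → W' t = fun ω => χ ω * W t ω) ∧ IsStronglyProgressive F W' ∧
      (∀ t ω, 0 ≤ W' t ω) ∧ (∀ ω, ∀ t : ℝ, 0 ≤ t → ContinuousWithinAt (W' · ω) (Ici t) t) ∧
      (∀ ω, ∀ t : ℝ, 0 < t → ∃ l, Tendsto (W' · ω) (𝓝[<] t) (𝓝 l)) := by
  have hχW : ∀ t, 0 ≤ t → Integrable (fun ω => χ ω * W t ω) μ := fun t ht =>
    (hWint t ht).bdd_mul (c := 1) (hχ.mono (F.le t₀)).aestronglyMeasurable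
      (Eventually.of_forall fun ω => (Real.norm_of_nonneg (hχ0 ω)).trans_le (hχ1 ω))
  obtain ⟨N, hNadapted, hN0, hNmod, hNrc, hNll⟩ := exists_cadlag_modification_condExp F hcomplete
    hrightcts (hχW t₀ ht₀) (Eventually.of_forall fun ω => mul_nonneg (hχ0 ω) (hW0 t₀ ω)) hdom
    (fun ω t ht => hWrc ω t ht.1) (fun ω t ht => hWll ω t ht.1)
  have hrc : ∀ ω t, ContinuousWithinAt (fun s => if s < t₀ then N s ω else χ ω * W s ω)
      (Ici t) t := fun ω t =>
    continuousWithinAt_Ici_ite (hNrc ω t) fun h =>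
      continuousWithinAt_const.mul (hWrc ω t (ht₀.trans h))
  have hχW_meas : ∀ t, t₀ ≤ t → StronglyMeasurable[F t] fun ω => χ ω * W t ω := fun t h =>
    (hχ.mono (F.mono h)).mul (hWprog.stronglyAdapted t)
  refine ⟨fun t ω => if t < t₀ then N t ω else χ ω * W t ω, fun t ht => ?_,
    fun t ht => funext fun ω => if_neg (not_lt.2 ht), ?_, fun t ω => ?_, fun ω t _ => hrc ω t,
    fun ω t ht => exists_tendsto_nhdsLT_ite (fun h => hNll ω t ⟨ht, h⟩) fun h =>
      (hWll ω t ht).elim fun l hl => ⟨χ ω * l, hl.const_mul (χ ω)⟩⟩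
  · rcases lt_or_ge t t₀ with h | h
    · simpa only [if_pos h, max_eq_right h.le] using hNmod t ⟨ht, h⟩
    · simp only [if_neg (not_lt.2 h), max_eq_left h]
      rw [condExp_of_stronglyMeasurable (F.le t) (hχW_meas t h) (hχW t ht)]
  · refine StronglyAdapted.isStronglyProgressive_of_continuousWithinAt (fun t => ?_) hrc
    by_cases h : t < t₀
    · simpa only [if_pos h] using hNadapted t
    · simpa only [if_neg h] using hχW_meas t (not_lt.1 h)
  · dsimp only
    split_ifs
    exacts [hN0 t ω, mul_nonneg (hχ0 ω) (hW0 t ω)]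

theorem statement15_general
    (μ : Measure Ω) [IsProbabilityMeasure μ] (F : Filtration ℝ mΩ)
    (hcomplete : ∀ s : Set Ω, μ s = 0 → ∀ t : ℝ, MeasurableSet[F t] s)
    (hrightcts : ∀ t : ℝ,
      (F t : MeasurableSpace Ω) = ⨅ s ∈ Set.Ioi t, (F s : MeasurableSpace Ω))
    (θ : ℝ)
    (U : ℝ → Ω → ℝ) (hUmeas : ProgMeasurable F U) (hUnonneg : ∀ t ω, 0 ≤ U t ω)
    (W : ℝ → Ω → ℝ) (hW : IsHEZSolution μ F θ U W)
    (t₀ : ℝ) (ht₀ : 0 ≤ t₀)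
    (hU0 : ∀ t : ℝ, t < t₀ → ∀ ω, U t ω = 0)
    (A : Set Ω) (hA : MeasurableSet[F t₀] A) :
    ∃ Wtilde : ℝ → Ω → ℝ,
      (∀ t : ℝ, 0 ≤ t → Wtilde t =ᵐ[μ]
        μ[(fun ω => A.indicator (fun _ => (1 : ℝ)) ω * W (max t t₀) ω) | F t]) ∧
      IsHEZSolution μ F θ
        (fun t ω => (μ[A.indicator (fun _ => (1 : ℝ)) | F t]) ω * U t ω) Wtilde := by
  obtain ⟨hWprog, hW0, hWrc, hWll, hWint, hWeq⟩ := hW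
  set χ : Ω → ℝ := A.indicator fun _ => 1
  set Φ : ℝ → Ω → ℝ := fun s ω => U s ω * W s ω ^ ((θ - 1) / θ)
  have hχ : StronglyMeasurable[F t₀] χ := stronglyMeasurable_const.indicator hA
  have hχ0 : ∀ ω, 0 ≤ χ ω := indicator_nonneg fun _ _ => zero_le_one
  have hχ1 : ∀ ω, χ ω ≤ 1 := indicator_le_self' fun _ _ => zero_le_one
  have hΦ0 : ∀ s ω, 0 ≤ Φ s ω := fun s ω => mul_nonneg (hUnonneg s ω) (rpow_nonneg (hW0 s ω) _)
  have hΦ : ∀ s < t₀, ∀ ω, Φ s ω = 0 := fun s hs ω => by simp [Φ, hU0 s hs ω]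
  have hY : ∀ r, 0 ≤ r → Integrable (fun ω => ∫ s in Ioi r, Φ s ω) μ := fun r =>
    integrable_setIntegral_Ioi (hUmeas.stronglyMeasurable_uncurry.measurable.mul
      (hWprog.stronglyMeasurable_uncurry.measurable.pow_const _)).stronglyMeasurable hΦ0 hWint
  obtain ⟨W', hW'mod, hW'eq, hW'prog, hW'0, hW'rc, hW'll⟩ :=
    exists_cadlag_modification_condExp_mul_max F hcomplete hrightcts ht₀ hχ hχ0 hχ1 hWprog hW0
      hWrc hWll (fun t ht => integrable_condExp.congr (hWeq t ht).symm)
      fun t ht => condExp_mul_le hWeq hΦ hΦ0 hY hχ hχ0 hχ1 ht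
  have hgen : ∀ s ω, (μ[χ|F s]) ω * U s ω * W' s ω ^ ((θ - 1) / θ) = χ ω * Φ s ω := by
    intro s ω
    rcases lt_or_ge s t₀ with h | h
    · simp [Φ, hU0 s h ω]
    · rw [condExp_of_stronglyMeasurable (F.le s) (hχ.mono (F.mono h))
        ((integrable_const 1).indicator (F.le t₀ _ hA)), hW'eq s h]
      by_cases hω : ω ∈ A <;> simp [χ, Φ, hω]
  refine ⟨W', hW'mod, hW'prog, hW'0, hW'rc, hW'll, ?_, fun t ht => ?_⟩
  · refine lt_of_le_of_lt (lintegral_mono fun ω => lintegral_mono fun s => ?_) hWint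
    rw [hgen]
    exact ENNReal.ofReal_le_ofReal (mul_le_of_le_one_left (hΦ0 s ω) (hχ1 ω))
  · simp only [hgen, integral_const_mul]
    exact (hW'mod t ht).trans (condExp_mul_max_eq hWeq hΦ hY hχ
      (fun ω => (Real.norm_of_nonneg (hχ0 ω)).trans_le (hχ1 ω)) ht)

/-- if `W` is a solution associated to `(h_EZ, U)`, `U` vanishes
before time `t₀`, and `A ∈ F_{t₀}`, then (a version of) the process
`W̃_t = E[1_A · W_{t∨t₀} | F_t]` is a solution associated to `(h_EZ, Ũ)` where
`Ũ_t = E[1_A | F_t] · U_t`. -/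
theorem statement15
    (μ : Measure Ω) [IsProbabilityMeasure μ] (F : Filtration ℝ mΩ)
    (hcomplete : ∀ s : Set Ω, μ s = 0 → ∀ t : ℝ, MeasurableSet[F t] s)
    (htrivial : ∀ s : Set Ω, MeasurableSet[F 0] s → μ s = 0 ∨ μ s = 1)
    (hrightcts : ∀ t : ℝ,
      (F t : MeasurableSpace Ω) = ⨅ s ∈ Set.Ioi t, (F s : MeasurableSpace Ω))
    (hleftcts : ∀ t : ℝ, 0 < t →
      (F t : MeasurableSpace Ω) = ⨆ s ∈ Set.Ico 0 t, (F s : MeasurableSpace Ω))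
    (θ : ℝ) (hθ : 1 < θ)
    (U : ℝ → Ω → ℝ) (hUmeas : ProgMeasurable F U) (hUnonneg : ∀ t ω, 0 ≤ U t ω)
    (W : ℝ → Ω → ℝ) (hW : IsHEZSolution μ F θ U W)
    (t₀ : ℝ) (ht₀ : 0 ≤ t₀)
    (hU0 : ∀ t : ℝ, t < t₀ → ∀ ω, U t ω = 0)
    (A : Set Ω) (hA : MeasurableSet[F t₀] A) :
    ∃ Wtilde : ℝ → Ω → ℝ,
      (∀ t : ℝ, 0 ≤ t → Wtilde t =ᵐ[μ]
        μ[(fun ω => A.indicator (fun _ => (1 : ℝ)) ω * W (max t t₀) ω) | F t]) ∧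
      IsHEZSolution μ F θ
        (fun t ω => (μ[A.indicator (fun _ => (1 : ℝ)) | F t]) ω * U t ω) Wtilde :=
  statement15_general μ F hcomplete hrightcts θ U hUmeas hUnonneg W hW t₀ ht₀ hU0 A hA
end
end

section
/- Let (Ω, G, P) be a probability space and (X_n)_{n∈ℕ} a sequence of random variables with |X_n| ≤ Y for all n, where Y is integrable. Let (G_n)_{n∈ℕ} be an increasing family of sub-σ-algebras of G and let G_∞ be the σ-algebra generated by ∪_{n=1}^∞ G_n. Then limsup_{n→∞} E[X_n | G_n] ≤ E[ limsup_{n→∞} X_n | G_∞ ] P-almost surely. -/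
/-!
Put `Z m = sup_{k ≥ m} X k`, so that `|Z m| ≤ Y` and `Z m` decreases to `limsup X`. For `n ≥ m`,
`E[X n | G n] ≤ E[Z m | G n]`, and the right-hand side tends a.s. to `E[Z m | G ∞]` by Lévy's
upward theorem; hence `limsup_n E[X n | G n] ≤ E[Z m | G ∞]` for every `m`. By conditional
dominated convergence `E[Z m | G ∞] → E[limsup X | G ∞]` in measure, hence a.s. along a
subsequence, and the inequality passes to the limit.
-/

open MeasureTheory Filter Set Topology

section TailSup

variable {α : Type*} [ConditionallyCompleteLinearOrder α] {u : ℕ → α}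

lemma le_ciSup_add_of_le (hu : BddAbove (range u)) {m n : ℕ} (hmn : m ≤ n) :
    u n ≤ ⨆ k, u (m + k) := by
  obtain ⟨k, rfl⟩ := Nat.exists_eq_add_of_le hmn
  exact le_ciSup (hu.mono (range_subset_iff.2 fun k => mem_range_self (m + k))) k

lemma antitone_ciSup_add (hu : BddAbove (range u)) : Antitone fun m => ⨆ k, u (m + k) :=
  antitone_nat_of_succ_le fun m => ciSup_le fun k => le_ciSup_add_of_le hu (by omega)

lemma bddBelow_range_ciSup_add (hu : BddAbove (range u)) (hu' : BddBelow (range u)) :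
    BddBelow (range fun m => ⨆ k, u (m + k)) := by
  obtain ⟨b, hb⟩ := hu'
  exact ⟨b, forall_mem_range.2 fun m =>
    (hb (mem_range_self m)).trans (le_ciSup_add_of_le hu le_rfl)⟩

lemma limsup_eq_ciInf_ciSup_add (hu : BddAbove (range u)) (hu' : BddBelow (range u)) :
    limsup u atTop = ⨅ m, ⨆ k, u (m + k) := by
  refine le_antisymm (le_ciInf fun m => ?_)
    (le_limsup_of_le hu.isBoundedUnder_of_range fun b hb => ?_)
  · exact limsup_le_of_le hu'.isBoundedUnder_of_range.isCoboundedUnder_le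
      (eventually_atTop.2 ⟨m, fun n => le_ciSup_add_of_le hu⟩)
  · obtain ⟨m, hm⟩ := eventually_atTop.1 hb
    exact ciInf_le_of_le (bddBelow_range_ciSup_add hu hu') m
      (ciSup_le fun k => hm _ (Nat.le_add_right m k))

lemma tendsto_ciSup_add_limsup [TopologicalSpace α] [OrderTopology α] (hu : BddAbove (range u))
    (hu' : BddBelow (range u)) :
    Tendsto (fun m => ⨆ k, u (m + k)) atTop (𝓝 (limsup u atTop)) := by
  rw [limsup_eq_ciInf_ciSup_add hu hu']
  exact tendsto_atTop_ciInf (antitone_ciSup_add hu) (bddBelow_range_ciSup_add hu hu')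

end TailSup

lemma abs_ciSup_add_le {u : ℕ → ℝ} {C : ℝ} (hu : ∀ n, |u n| ≤ C) (m : ℕ) :
    |⨆ k, u (m + k)| ≤ C := by
  have hbdd : BddAbove (range u) := ⟨C, forall_mem_range.2 fun n => (abs_le.1 (hu n)).2⟩
  exact abs_le.2 ⟨(abs_le.1 (hu m)).1.trans (le_ciSup_add_of_le hbdd le_rfl),
    ciSup_le fun k => (abs_le.1 (hu _)).2⟩

namespace MeasureTheory

theorem tendstoInMeasure_condExp_of_dominated {α E : Type*} {m m₀ : MeasurableSpace α}
    {μ : Measure α} [NormedAddCommGroup E] [NormedSpace ℝ E] [CompleteSpace E]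
    (hm : m ≤ m₀) [SigmaFinite (μ.trim hm)] {fs : ℕ → α → E} {f : α → E} (bound : α → ℝ)
    (hfs_meas : ∀ n, AEStronglyMeasurable (fs n) μ) (h_int_bound : Integrable bound μ)
    (hfs_bound : ∀ n, ∀ᵐ x ∂μ, ‖fs n x‖ ≤ bound x)
    (hfs : ∀ᵐ x ∂μ, Tendsto (fun n => fs n x) atTop (𝓝 (f x))) :
    TendstoInMeasure μ (fun n => μ[fs n | m]) atTop μ[f | m] :=
  (tendstoInMeasure_of_tendsto_Lp (tendsto_condExpL1_of_dominated_convergence hm bound hfs_meas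
    h_int_bound hfs_bound hfs)).congr (fun _ => (condExp_ae_eq_condExpL1 hm _).symm)
    (condExp_ae_eq_condExpL1 hm _).symm

/-- The lower bound `W` keeps `μ[X n | ℱ n]` bounded below; otherwise the real `limsup` is a junk
value. -/
theorem ae_limsup_condExp_le_condExp_iSup {Ω : Type*} {m₀ : MeasurableSpace Ω} {μ : Measure Ω}
    [IsFiniteMeasure μ] {ℱ : Filtration ℕ m₀} {X : ℕ → Ω → ℝ} {W Z : Ω → ℝ}
    (hX : ∀ n, Integrable (X n) μ) (hW : Integrable W μ) (hZ : Integrable Z μ)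
    (hWX : ∀ n, W ≤ᵐ[μ] X n) {m : ℕ} (hXZ : ∀ n, m ≤ n → X n ≤ᵐ[μ] Z) :
    ∀ᵐ ω ∂μ, limsup (fun n => μ[X n | ℱ n] ω) atTop ≤ μ[Z | ⨆ n, ℱ n] ω := by
  have hlow : ∀ᵐ ω ∂μ, ∀ n, μ[W | ℱ n] ω ≤ μ[X n | ℱ n] ω :=
    ae_all_iff.2 fun n => condExp_mono hW (hX n) (hWX n)
  have hup : ∀ᵐ ω ∂μ, ∀ n, m ≤ n → μ[X n | ℱ n] ω ≤ μ[Z | ℱ n] ω := by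
    refine ae_all_iff.2 fun n => ?_
    by_cases hmn : m ≤ n
    · exact (condExp_mono (hX n) hZ (hXZ n hmn)).mono fun ω h _ => h
    · exact .of_forall fun _ h => absurd h hmn
  filter_upwards [hlow, hup, tendsto_ae_condExp (ℱ := ℱ) W, tendsto_ae_condExp (ℱ := ℱ) Z]
    with ω hlow hup hW hZ
  calc limsup (fun n => μ[X n | ℱ n] ω) atTop ≤ limsup (fun n => μ[Z | ℱ n] ω) atTop :=
        limsup_le_limsup (eventually_atTop.2 ⟨m, hup⟩)
          (hW.isBoundedUnder_ge.mono_ge (.of_forall hlow)).isCoboundedUnder_le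
          hZ.isBoundedUnder_le
    _ = μ[Z | ⨆ n, ℱ n] ω := hZ.limsup_eq

end MeasureTheory

/-- a variant of Hunt's lemma / reverse Fatou: if `(X_n)` is a
sequence of random variables dominated in absolute value by an integrable `Y`,
and `(G_n)` is an increasing family of sub-σ-algebras with `G_∞ = σ(∪_n G_n)`,
then `limsup_n E[X_n | G_n] ≤ E[limsup_n X_n | G_∞]` almost surely. -/
theorem statement19
    {Ω : Type*} {mΩ : MeasurableSpace Ω}
    (μ : Measure Ω) [IsProbabilityMeasure μ]
    (X : ℕ → Ω → ℝ) (hXmeas : ∀ n, AEStronglyMeasurable (X n) μ)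
    (Y : Ω → ℝ) (hY : Integrable Y μ)
    (hbound : ∀ n, ∀ᵐ ω ∂μ, |X n ω| ≤ Y ω)
    (G : ℕ → MeasurableSpace Ω) (hGmono : Monotone G)
    (hGle : ∀ n, G n ≤ mΩ) :
    ∀ᵐ ω ∂μ,
      Filter.limsup (fun n => (μ[X n | G n]) ω) Filter.atTop ≤
        (μ[(fun ω' => Filter.limsup (fun n => X n ω') Filter.atTop) | ⨆ n, G n]) ω := by
  let ℱ : Filtration ℕ mΩ := ⟨G, hGmono, hGle⟩
  let Z : ℕ → Ω → ℝ := fun m ω => ⨆ k, X (m + k) ω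
  have hbound_all : ∀ᵐ ω ∂μ, ∀ n, |X n ω| ≤ Y ω := ae_all_iff.2 hbound
  have hZbound : ∀ m, ∀ᵐ ω ∂μ, ‖Z m ω‖ ≤ Y ω := fun m =>
    hbound_all.mono fun ω h => abs_ciSup_add_le h m
  have hZmeas : ∀ m, AEStronglyMeasurable (Z m) μ := fun m =>
    (AEMeasurable.iSup fun k => (hXmeas (m + k)).aemeasurable).aestronglyMeasurable
  have hbdd : ∀ᵐ ω ∂μ, BddAbove (range fun n => X n ω) ∧ BddBelow (range fun n => X n ω) :=
    hbound_all.mono fun ω h => ⟨⟨Y ω, forall_mem_range.2 fun n => (abs_le.1 (h n)).2⟩,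
      ⟨-Y ω, forall_mem_range.2 fun n => (abs_le.1 (h n)).1⟩⟩
  have hXZ : ∀ m n, m ≤ n → X n ≤ᵐ[μ] Z m := fun _ _ hmn =>
    hbdd.mono fun _ h => le_ciSup_add_of_le h.1 hmn
  have hZlim : ∀ᵐ ω ∂μ, Tendsto (fun m => Z m ω) atTop (𝓝 (limsup (fun n => X n ω) atTop)) :=
    hbdd.mono fun _ h => tendsto_ciSup_add_limsup h.1 h.2
  have hlimsup_le : ∀ᵐ ω ∂μ, ∀ m,
      limsup (fun n => μ[X n | G n] ω) atTop ≤ μ[Z m | ⨆ n, G n] ω :=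
    ae_all_iff.2 fun m => ae_limsup_condExp_le_condExp_iSup (ℱ := ℱ)
      (fun n => hY.mono' (hXmeas n) (hbound n)) hY.neg (hY.mono' (hZmeas m) (hZbound m))
      (fun n => (hbound n).mono fun ω h => neg_le_of_abs_le h) (hXZ m)
  obtain ⟨ns, -, hns⟩ := (tendstoInMeasure_condExp_of_dominated (iSup_le hGle) Y hZmeas hY
    hZbound hZlim).exists_seq_tendsto_ae
  filter_upwards [hlimsup_le, hns] with ω hlimsup_le hns
  exact ge_of_tendsto' hns fun k => hlimsup_le (ns k)
end
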